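/- arXiv:2402.01059 — 3 statements merged into one kernel-verified Lean document; each statement's English description precedes it below -/
import Mathlib

section
/- With the error dynamics e_{i+1} = A e_i + F n_i, e_0 = 0, A = [[1,T],[0,1]], F = (1,0)ᵀ, and each n_i ∈ 2L·W for a convex set W ⊆ ℝ containing 0 and L ≥ 0, the terminal error satisfies e_N ∈ 2LN·F·W := {(2LN w, 0)ᵀ : w ∈ W} for all N ≥ 1. -/
open Matrix

theorem terminal_error_set_bound
    (T L : ℝ) (hL : 0 ≤ L)
    (W : Set ℝ) (hW : Convex ℝ W) (h0W : (0 : ℝ) ∈ W)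
    (n : ℕ → ℝ) (hn : ∀ i, ∃ w ∈ W, n i = 2 * L * w)
    (e : ℕ → Fin 2 → ℝ)
    (he0 : e 0 = 0)
    (herec : ∀ i, e (i + 1) =
      (!![1, T; 0, 1] : Matrix (Fin 2) (Fin 2) ℝ) *ᵥ e i + n i • ![1, 0]) :
    ∀ N : ℕ, 1 ≤ N → ∃ w ∈ W, e N = (2 * L * N * w) • ![(1 : ℝ), 0] := by
  choose w hwW hwn using hn
  have key : ∀ N : ℕ, e N = (∑ i ∈ Finset.range N, n i) • ![(1 : ℝ), 0] := by
    intro N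
    induction N with
    | zero => simp [he0]
    | succ N ih =>
        rw [herec, ih, Finset.sum_range_succ, add_smul]
        congr 1
        funext j
        fin_cases j <;>
          simp [mulVec, dotProduct, Fin.sum_univ_two, Matrix.cons_val_zero,
            Matrix.cons_val_one]
  intro N hN
  have hNpos : (0 : ℝ) < N := by exact_mod_cast hN
  refine ⟨(∑ i ∈ Finset.range N, w i) / N, ?_, ?_⟩
  · have := hW.sum_mem (t := Finset.range N) (w := fun _ => (N : ℝ)⁻¹)
      (z := w) (fun i _ => by positivity)
      (by simp [Finset.sum_const, mul_inv_cancel₀ hNpos.ne']) (fun i _ => hwW i)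
    simpa [Finset.smul_sum, div_eq_inv_mul, Finset.mul_sum] using this
  · rw [key]
    congr 1
    have : ∑ i ∈ Finset.range N, n i = 2 * L * ∑ i ∈ Finset.range N, w i := by
      rw [Finset.mul_sum]; exact Finset.sum_congr rfl fun i _ => hwn i
    rw [this]
    field_simp
end

section
/- Let 𝒟 = {(x_d, u_d)} be a finite set of state-input pairs in a convex state set 𝒳 ⊆ ℝⁿ and convex input set 𝒰 ⊆ ℝᵐ, let R ⊆ ℝⁿ be convex, and let 𝒩 ⊆ ℝⁿ be a convex noise set. Let S = {x_d : A x_d + B u_d ∈ R ⊖ 𝒩}. Then for every x in the convex hull of S there exists u ∈ 𝒰 such that A x + B u + n ∈ R for all n ∈ 𝒩. -/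
open Matrix

theorem data_driven_robust_steering
    (n m D : ℕ)
    (A : Matrix (Fin n) (Fin n) ℝ) (B : Matrix (Fin n) (Fin m) ℝ)
    (𝒳 R 𝒩 : Set (Fin n → ℝ)) (𝒰 : Set (Fin m → ℝ))
    (hX : Convex ℝ 𝒳) (hU : Convex ℝ 𝒰) (hR : Convex ℝ R) (hN : Convex ℝ 𝒩)
    (x : Fin D → (Fin n → ℝ)) (u : Fin D → (Fin m → ℝ))
    (hx : ∀ d, x d ∈ 𝒳) (hu : ∀ d, u d ∈ 𝒰)
    (S : Set (Fin n → ℝ))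
    (hS : S = {p | ∃ d : Fin D, p = x d ∧
      A *ᵥ x d + B *ᵥ u d ∈ {z | ∀ nn ∈ 𝒩, z + nn ∈ R}}) :
    ∀ p ∈ convexHull ℝ S, ∃ v ∈ 𝒰, ∀ nn ∈ 𝒩, A *ᵥ p + B *ᵥ v + nn ∈ R := by
  set T : Set (Fin n → ℝ) :=
    {p | ∃ v ∈ 𝒰, ∀ nn ∈ 𝒩, A *ᵥ p + B *ᵥ v + nn ∈ R} with hT
  have hTconv : Convex ℝ T := by
    rintro p₁ ⟨v₁, hv₁, h₁⟩ p₂ ⟨v₂, hv₂, h₂⟩ a b ha hb hab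
    refine ⟨a • v₁ + b • v₂, hU hv₁ hv₂ ha hb hab, fun nn hnn => ?_⟩
    have key : A *ᵥ (a • p₁ + b • p₂) + B *ᵥ (a • v₁ + b • v₂) + nn
        = a • (A *ᵥ p₁ + B *ᵥ v₁ + nn) + b • (A *ᵥ p₂ + B *ᵥ v₂ + nn) := by
      have hn : nn = a • nn + b • nn := by
        rw [← add_smul, hab, one_smul]
      rw [mulVec_add, mulVec_add, mulVec_smul, mulVec_smul, mulVec_smul,
        mulVec_smul]
      nth_rewrite 1 [hn]
      module
    rw [key]
    exact hR (h₁ nn hnn) (h₂ nn hnn) ha hb hab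
  have hST : S ⊆ T := by
    rintro p hp
    rw [hS] at hp
    obtain ⟨d, rfl, hd⟩ := hp
    exact ⟨u d, hu d, hd⟩
  intro p hp
  exact convexHull_min hST hTconv hp
end

section
/- Define robust controllable sets for the system x⁺ = A x + B u + F n with n ∈ 𝒩, constraints x ∈ 𝒳, u ∈ 𝒰, and target set 𝒯 recursively by 𝒦₀ = 𝒯 and 𝒦_{i+1} = {x ∈ 𝒳 : ∃ u ∈ 𝒰, A x + B u + F n ∈ 𝒦_i for all n ∈ 𝒩}. If the sets produced by Algorithm 1 satisfy: R₀ = 𝒯 and R_{i} = conv{x_d : (x_d,u_d) ∈ 𝒟, A x_d + B u_d ∈ R_{i−1} ⊖ F𝒩}, with 𝒳, 𝒰, 𝒩, and all R_{i−1} convex and all data feasible (x_d ∈ 𝒳, u_d ∈ 𝒰), then R_i ⊆ 𝒦_i for all i. -/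
open Matrix

theorem data_driven_sets_inner_approximate_robust_controllable
    (n m D : ℕ)
    (A : Matrix (Fin n) (Fin n) ℝ) (B : Matrix (Fin n) (Fin m) ℝ)
    (F : Fin n → ℝ)
    (𝒳 𝒯 : Set (Fin n → ℝ)) (𝒰 : Set (Fin m → ℝ)) (𝒩 : Set ℝ)
    (hX : Convex ℝ 𝒳) (hU : Convex ℝ 𝒰) (hN : Convex ℝ 𝒩)
    (x : Fin D → (Fin n → ℝ)) (u : Fin D → (Fin m → ℝ))
    (hx : ∀ d, x d ∈ 𝒳) (hu : ∀ d, u d ∈ 𝒰)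
    (K R : ℕ → Set (Fin n → ℝ))
    (hK0 : K 0 = 𝒯)
    (hKsucc : ∀ i, K (i + 1) =
      {p ∈ 𝒳 | ∃ v ∈ 𝒰, ∀ nn ∈ 𝒩, A *ᵥ p + B *ᵥ v + nn • F ∈ K i})
    (hR0 : R 0 = 𝒯)
    (hRsucc : ∀ i, R (i + 1) = convexHull ℝ
      {p | ∃ d : Fin D, p = x d ∧
        A *ᵥ x d + B *ᵥ u d ∈
          {z | ∀ q ∈ {q' : Fin n → ℝ | ∃ nn ∈ 𝒩, q' = nn • F}, z + q ∈ R i}})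
    (hRconv : ∀ i, Convex ℝ (R i)) :
    ∀ i, R i ⊆ K i := by
  intro i
  induction i with
  | zero => rw [hR0, hK0]
  | succ i ih =>
    rw [hRsucc, hKsucc]
    intro p hp
    rw [convexHull_eq] at hp
    obtain ⟨ι, t, w, z, hw0, hw1, hz, hp⟩ := hp
    choose d hd1 hd2 using hz
    classical
    set U : ι → Fin m → ℝ := fun j => if h : j ∈ t then u (d j h) else 0 with hU'
    have hpw : p = ∑ j ∈ t, w j • z j := by
      rw [← hp, Finset.centerMass, hw1, inv_one, one_smul]
    have hpX : p ∈ 𝒳 := by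
      rw [← hp]
      exact hX.centerMass_mem hw0 (by rw [hw1]; norm_num)
        (fun j hj => by rw [hd1 j hj]; exact hx _)
    refine ⟨hpX, t.centerMass w U, ?_, ?_⟩
    · exact hU.centerMass_mem hw0 (by rw [hw1]; norm_num)
        (fun j hj => by simp only [hU', dif_pos hj]; exact hu _)
    · intro nn hnn
      have hvw : t.centerMass w U = ∑ j ∈ t, w j • U j := by
        rw [Finset.centerMass, hw1, inv_one, one_smul]
      have key : A *ᵥ p + B *ᵥ t.centerMass w U + nn • F
          = ∑ j ∈ t, w j • (A *ᵥ z j + B *ᵥ U j + nn • F) := by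
        rw [hpw, hvw]
        have h1 : A *ᵥ (∑ j ∈ t, w j • z j) = ∑ j ∈ t, w j • (A *ᵥ z j) := by
          simp only [← Matrix.mulVecLin_apply, map_sum, LinearMap.map_smul]
        have h2 : B *ᵥ (∑ j ∈ t, w j • U j) = ∑ j ∈ t, w j • (B *ᵥ U j) := by
          simp only [← Matrix.mulVecLin_apply, map_sum, LinearMap.map_smul]
        have h3 : nn • F = ∑ j ∈ t, w j • (nn • F) := by
          rw [← Finset.sum_smul, hw1, one_smul]
        rw [h1, h2]
        nth_rewrite 1 [h3]
        rw [← Finset.sum_add_distrib, ← Finset.sum_add_distrib]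
        exact Finset.sum_congr rfl (fun j hj => by rw [smul_add, smul_add])
      rw [key]
      apply ih
      refine (hRconv i).sum_mem hw0 hw1 (fun j hj => ?_)
      have := hd2 j hj (nn • F) ⟨nn, hnn, rfl⟩
      rw [hd1 j hj]; simp only [hU', dif_pos hj]
      exact this
end
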